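/- Let 2 ≤ r ≤ d and 1 ≤ j ≤ r − 1. If x ∈ ℕ^d is r-tight, then g_j(x) is r-tight. -/

import Mathlib

/-!
Let `S` be the set of seats of `δ^j(x), …, δ^d(x)` and `f = nextPt d S` the successor map
along the spiral restricted to the seats `S`. It is strictly increasing on the points with seat
in `S` and commutes with raising by one level (`+ d`), so it induces a permutation of `S`. Hence
`g_j` keeps the order of the points: `δ^k(g_j x) = δ^k(x)` for `k < j` and
`δ^k(g_j x) = f (δ^k(x))` for `k ≥ j`. Being the successor along `S`, `f` conjugates the
successor along any `S' ⊆ S` into the successor along the seats of the `f`-image of the points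
realising `S'`; with `S'` the seats of `δ^r(x), …, δ^d(x)` this carries the `r`-tightness of `x`
to that of `g_j(x)`.
-/

namespace Spiral

/-- The size `n(x) = n₁ + ⋯ + n_d` of a configuration `x ∈ ℕ^d`. -/
def size {d : ℕ} (x : Fin d → ℕ) : ℕ := ∑ i, x i

/-- The weight `W(x) = Σ_{i<j} (max(0, x_j − x_i) + max(0, x_i − x_j − 1))`
(truncated ℕ-subtraction realizes the `max(0,·)`). -/
def weight {d : ℕ} (x : Fin d → ℕ) : ℕ :=
  ∑ i : Fin d, ∑ j : Fin d, if i < j then (x j - x i) + (x i - x j - 1) else 0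

/-- The configuration `x` as a set of points of `[d] × ℕ`: the point `(i, n)` (seat `i`
0-indexed, level `n`) is encoded as the natural number `n*d + i`. The usual order on the
encodings is exactly the height order `≺` (height `h(i,n) = n + i/d`), and the spiral
shift `δ + s/d` is encoded as `+ s`. -/
def pts (d : ℕ) (x : Fin d → ℕ) : Finset ℕ :=
  Finset.image (fun i : Fin d => x i * d + i.val) Finset.univ

/-- The points of `x` listed in increasing height order: `δ¹(x), …, δ^d(x)`. -/
def sortedPts (d : ℕ) (x : Fin d → ℕ) : List ℕ :=
  (pts d x).sort (· ≤ ·)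

/-- The lowest point strictly above `p` (along the spiral) whose seat lies in `S`. -/
noncomputable def nextPt (d : ℕ) (S : Finset ℕ) (p : ℕ) : ℕ :=
  sInf {q : ℕ | p < q ∧ q % d ∈ S}

/-- The spiral shifting operator `g_j` (for `1 ≤ j ≤ d`): it fixes the lowest `j - 1`
points `δ¹(x), …, δ^{j-1}(x)` and moves each remaining point `δ^k(x)` (`k ≥ j`) to
`δ^k(x) + s_k/d`, where `s_k` is the minimal positive integer such that the seat of
`δ^k(x) + s_k/d` lies in `{i(δ^j(x)), …, i(δ^d(x))}`. The resulting configuration is read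
off from the new point set (which has exactly one point per seat). -/
noncomputable def gOp (d : ℕ) (j : ℕ) (x : Fin d → ℕ) : Fin d → ℕ := fun i =>
  let L := sortedPts d x
  let low := L.take (j - 1)
  let high := L.drop (j - 1)
  let S : Finset ℕ := high.toFinset.image (· % d)
  let Q : Finset ℕ := low.toFinset ∪ (high.map (nextPt d S)).toFinset
  ∑ q ∈ Q.filter (fun q => q % d = i.val), q / d

/-- `g^a := g₁^{a₁} ∘ ⋯ ∘ g_d^{a_d}` (here `a i` is the exponent of `g_{i+1}`). -/
noncomputable def gIter (d : ℕ) (a : Fin d → ℕ) (x : Fin d → ℕ) : Fin d → ℕ :=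
  (List.finRange d).foldr (fun j y => (gOp d (j.val + 1))^[a j] y) x

end Spiral

namespace Spiral

/-- For `2 ≤ r ≤ d`: a configuration `x ∈ ℕ^d` is `r`-tight if `δ^r(x)` is the `≺`-lowest
point of `{i(δ^r(x)), …, i(δ^d(x))} × ℕ` that is `≺`-higher than `δ^{r−1}(x)`. In the
encoding, `δ^r(x)` is the `(r-1)`-st entry (0-indexed) of the height-sorted list of points,
and the condition says it equals the least point above `δ^{r-1}(x)` whose seat lies among
the seats of `δ^r(x), …, δ^d(x)`. -/
def rTight (d r : ℕ) (x : Fin d → ℕ) : Prop :=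
  (sortedPts d x).getD (r - 1) 0 =
    nextPt d (((sortedPts d x).drop (r - 1)).toFinset.image (· % d))
      ((sortedPts d x).getD (r - 2) 0)

end Spiral

namespace Spiral

variable {d : ℕ} {S : Finset ℕ} {p q : ℕ}

lemma nextPt_spec (hS : ∃ s ∈ S, s < d) (p : ℕ) : p < nextPt d S p ∧ nextPt d S p % d ∈ S := by
  obtain ⟨s, hs, hsd⟩ := hS
  refine Nat.sInf_mem (s := {q | p < q ∧ q % d ∈ S}) ⟨(p / d + 1) * d + s, ?_, ?_⟩
  · nlinarith [Nat.div_add_mod p d, Nat.mod_lt p (by omega : 0 < d)]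
  · rwa [Nat.mul_add_mod_of_lt hsd]

lemma lt_nextPt (hS : ∃ s ∈ S, s < d) (p : ℕ) : p < nextPt d S p :=
  (nextPt_spec hS p).1

lemma nextPt_mod_mem (hS : ∃ s ∈ S, s < d) (p : ℕ) : nextPt d S p % d ∈ S :=
  (nextPt_spec hS p).2

lemma nextPt_le (hpq : p < q) (hq : q % d ∈ S) : nextPt d S p ≤ q :=
  Nat.sInf_le ⟨hpq, hq⟩

lemma nextPt_monotone (hS : ∃ s ∈ S, s < d) : Monotone (nextPt d S) := fun _ q hpq =>
  nextPt_le (hpq.trans_lt (lt_nextPt hS q)) (nextPt_mod_mem hS q)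

lemma nextPt_strictMonoOn (hS : ∃ s ∈ S, s < d) :
    StrictMonoOn (nextPt d S) {q | q % d ∈ S} := fun _ _ q hq hpq =>
  (nextPt_le hpq hq).trans_lt (lt_nextPt hS q)

lemma nextPt_add_mul (hS : ∃ s ∈ S, s < d) (p e : ℕ) :
    nextPt d S (p + e * d) = nextPt d S p + e * d := by
  have hp := nextPt_spec hS p
  have hpe := nextPt_spec hS (p + e * d)
  refine le_antisymm (nextPt_le (by omega) (by rw [Nat.add_mul_mod_self_right]; exact hp.2)) ?_
  have hle : e * d ≤ nextPt d S (p + e * d) := by omega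
  have := nextPt_le (S := S) (q := nextPt d S (p + e * d) - e * d) (p := p) (by omega)
    (by rw [← Nat.add_mul_mod_self_right _ e d, Nat.sub_add_cancel hle]; exact hpe.2)
  omega

lemma nextPt_mod (hS : ∃ s ∈ S, s < d) (p : ℕ) : nextPt d S p % d = nextPt d S (p % d) % d := by
  conv_lhs => rw [← Nat.mod_add_div' p d, nextPt_add_mul hS, Nat.add_mul_mod_self_right]

lemma mod_eq_of_nextPt_mod_eq (hS : ∃ s ∈ S, s < d) (hp : p % d ∈ S) (hq : q % d ∈ S)
    (h : nextPt d S p % d = nextPt d S q % d) : p % d = q % d := by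
  wlog hle : nextPt d S p ≤ nextPt d S q generalizing p q
  · exact (this hq hp h.symm (by omega)).symm
  obtain ⟨e, he⟩ := (Nat.modEq_iff_dvd' hle).mp h
  have hpe : (p + e * d) % d ∈ S := by rwa [Nat.add_mul_mod_self_right]
  have : p + e * d = q := (nextPt_strictMonoOn hS).injOn hpe hq <| by
    rw [nextPt_add_mul hS, Nat.mul_comm e d]; omega
  rw [← this, Nat.add_mul_mod_self_right]

lemma exists_nextPt_eq (hS : ∃ s ∈ S, s < d) {t : ℕ} (hq : q % d ∈ S) (ht : t < q)
    (htS : t % d ∈ S) : ∃ p, p % d ∈ S ∧ nextPt d S p = q := by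
  classical
  let F := (Finset.range q).filter (fun a => a % d ∈ S)
  have hF : F.Nonempty := ⟨t, by simp [F, ht, htS]⟩
  have hmax : F.max' hF < q ∧ F.max' hF % d ∈ S := by simpa [F] using F.max'_mem hF
  refine ⟨F.max' hF, hmax.2, le_antisymm (nextPt_le hmax.1 hq) (not_lt.mp fun hlt => ?_)⟩
  have := F.le_max' _ (by simpa [F] using ⟨hlt, nextPt_mod_mem hS (F.max' hF)⟩)
  exact absurd (lt_nextPt hS (F.max' hF)) this.not_gt

def seats (d : ℕ) (l : List ℕ) : Finset ℕ := l.toFinset.image (· % d)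

lemma mem_seats {l : List ℕ} {s : ℕ} : s ∈ seats d l ↔ ∃ c ∈ l, c % d = s := by
  simp [seats]

lemma nextPt_seats_map_nextPt (hS : ∃ s ∈ S, s < d) {P : List ℕ} (hP : P ≠ [])
    (hPS : ∀ c ∈ P, c % d ∈ S) (hp : p % d ∈ S) :
    nextPt d (seats d (P.map (nextPt d S))) (nextPt d S p) =
      nextPt d S (nextPt d (seats d P) p) := by
  have hd : 0 < d := by obtain ⟨s, -, hs⟩ := hS; omega
  obtain ⟨c₀, hc₀⟩ := List.exists_mem_of_ne_nil P hP
  obtain ⟨hpq, hqP⟩ := nextPt_spec ⟨c₀ % d, mem_seats.2 ⟨c₀, hc₀, rfl⟩, Nat.mod_lt _ hd⟩ p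
  obtain ⟨c, hcP, hcq⟩ := mem_seats.1 hqP
  have hqS := hcq ▸ hPS c hcP
  have hfq : nextPt d S (nextPt d (seats d P) p) % d ∈ seats d (P.map (nextPt d S)) :=
    mem_seats.2 ⟨_, List.mem_map_of_mem hcP, by rw [nextPt_mod hS, hcq, ← nextPt_mod hS]⟩
  refine le_antisymm (nextPt_le (nextPt_strictMonoOn hS hp hqS hpq) hfq) ?_
  obtain ⟨hlt, ht⟩ := nextPt_spec ⟨_, hfq, Nat.mod_lt _ hd⟩ (nextPt d S p)
  -- the competitor `t` is the successor of a point `p' > p` whose seat is among those of `P`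
  obtain ⟨_, hmem, hc't⟩ := mem_seats.1 ht
  obtain ⟨c', hc'P, rfl⟩ := List.mem_map.1 hmem
  obtain ⟨p', hp'S, hp't⟩ :=
    exists_nextPt_eq hS (hc't ▸ nextPt_mod_mem hS c') hlt (nextPt_mod_mem hS p)
  rw [← hp't] at hlt hc't ⊢
  have hp'P : p' % d ∈ seats d P :=
    mem_seats.2 ⟨c', hc'P, mod_eq_of_nextPt_mod_eq hS (hPS c' hc'P) hp'S hc't⟩
  exact nextPt_monotone hS (nextPt_le ((nextPt_monotone hS).reflect_lt hlt) hp'P)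

lemma mem_pts {x : Fin d → ℕ} : q ∈ pts d x ↔ ∃ i : Fin d, x i * d + i = q := by
  simp [pts]

lemma pts_injOn_mod (x : Fin d → ℕ) : Set.InjOn (· % d) (pts d x : Set ℕ) := by
  rintro _ hp _ hq h
  obtain ⟨i, rfl⟩ := mem_pts.1 hp
  obtain ⟨k, rfl⟩ := mem_pts.1 hq
  simp only [Nat.mul_add_mod_of_lt i.isLt, Nat.mul_add_mod_of_lt k.isLt] at h
  rw [Fin.ext h]

lemma card_pts (x : Fin d → ℕ) : (pts d x).card = d := by
  rw [pts, Finset.card_image_of_injective, Finset.card_univ, Fintype.card_fin]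
  intro i k h
  simpa [Nat.mul_add_mod_of_lt i.isLt, Nat.mul_add_mod_of_lt k.isLt, Fin.ext_iff]
    using congrArg (· % d) h

lemma sortedPts_pairwise (x : Fin d → ℕ) : (sortedPts d x).Pairwise (· < ·) :=
  (Finset.sortedLT_sort _).pairwise

lemma length_sortedPts (x : Fin d → ℕ) : (sortedPts d x).length = d := by
  rw [sortedPts, Finset.length_sort, card_pts]

lemma pts_eq_of_injOn_mod {R : Finset ℕ} (hinj : Set.InjOn (· % d) R) (hcard : R.card = d) :
    pts d (fun i : Fin d => ∑ q ∈ R.filter (fun q => q % d = i), q / d) = R := by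
  have hseats : R.image (· % d) = Finset.range d := by
    refine Finset.eq_of_subset_of_card_le (fun _ ha => ?_) ?_
    · obtain ⟨a, haR, rfl⟩ := Finset.mem_image.1 ha
      exact Finset.mem_range.2 (Nat.mod_lt _ (hcard ▸ Finset.card_pos.2 ⟨a, haR⟩))
    · rw [Finset.card_range, Finset.card_image_of_injOn hinj, hcard]
  have hlevel : ∀ i : Fin d, ∃ q ∈ R, q % d = i ∧
      (∑ q ∈ R.filter (fun q => q % d = i), q / d) * d + i = q := by
    intro i
    obtain ⟨q, hqR, hqi⟩ := Finset.mem_image.1 (hseats ▸ Finset.mem_range.2 i.isLt)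
    have hfilter : R.filter (fun q => q % d = i) = {q} := by
      ext a
      simp only [Finset.mem_filter, Finset.mem_singleton]
      exact ⟨fun ⟨haR, hai⟩ => hinj haR hqR (hai.trans hqi.symm), fun h => h ▸ ⟨hqR, hqi⟩⟩
    exact ⟨q, hqR, hqi, by rw [hfilter, Finset.sum_singleton, ← hqi, Nat.div_add_mod']⟩
  ext q
  rw [mem_pts]
  constructor
  · rintro ⟨i, rfl⟩
    obtain ⟨q, hqR, -, hq⟩ := hlevel i
    exact hq ▸ hqR
  · intro hqR
    obtain ⟨q', hq'R, hq'i, hq'⟩ := hlevel ⟨q % d, Nat.mod_lt _ (hcard ▸ Finset.card_pos.2 ⟨q, hqR⟩)⟩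
    exact ⟨_, hq'.trans (hinj hq'R hqR hq'i)⟩

noncomputable def spiralShift (d k : ℕ) (L : List ℕ) : List ℕ :=
  L.take k ++ (L.drop k).map (nextPt d (seats d (L.drop k)))

lemma length_spiralShift (k : ℕ) (L : List ℕ) : (spiralShift d k L).length = L.length := by
  simp only [spiralShift, List.length_append, List.length_take, List.length_map, List.length_drop]
  omega

lemma pairwise_take_append_map_drop {L : List ℕ} (hL : L.Pairwise (· < ·)) (k : ℕ)
    {f : ℕ → ℕ} (hf : StrictMonoOn f {c | c ∈ L.drop k}) (hlt : ∀ c, c < f c) :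
    (L.take k ++ (L.drop k).map f).Pairwise (· < ·) := by
  rw [← List.take_append_drop k L, List.pairwise_append] at hL
  refine List.pairwise_append.2 ⟨hL.1, List.pairwise_map.2 (hL.2.1.imp_of_mem
    fun ha hb hab => hf ha hb hab), fun a ha b hb => ?_⟩
  obtain ⟨c, hc, rfl⟩ := List.mem_map.1 hb
  exact (hL.2.2 a ha c hc).trans (hlt c)

section sortedPts

variable (x : Fin d → ℕ) {k : ℕ}

lemma exists_seat_drop_sortedPts (hk : k < d) : ∃ s ∈ seats d ((sortedPts d x).drop k), s < d :=
  have hne : (sortedPts d x).drop k ≠ [] := by simp [length_sortedPts, hk]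
  let ⟨c, hc⟩ := List.exists_mem_of_ne_nil _ hne
  ⟨c % d, mem_seats.2 ⟨c, hc, rfl⟩, Nat.mod_lt _ (by omega)⟩

lemma mod_notMem_seats_drop_sortedPts {a : ℕ} (ha : a ∈ (sortedPts d x).take k) :
    a % d ∉ seats d ((sortedPts d x).drop k) := fun h => by
  obtain ⟨c, hc, hca⟩ := mem_seats.1 h
  have hnodup := (sortedPts_pairwise x).nodup
  rw [← List.take_append_drop k (sortedPts d x)] at hnodup
  have hac : a = c := pts_injOn_mod x (Finset.mem_sort _ |>.1 (List.mem_of_mem_take ha))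
    (Finset.mem_sort _ |>.1 (List.mem_of_mem_drop hc)) hca.symm
  exact List.disjoint_of_nodup_append hnodup ha (hac ▸ hc)

lemma injOn_mod_spiralShift_sortedPts (hk : k < d) :
    Set.InjOn (· % d) {q | q ∈ spiralShift d k (sortedPts d x)} := by
  have hS := exists_seat_drop_sortedPts x hk
  have hmemS : ∀ c ∈ (sortedPts d x).drop k, c % d ∈ seats d ((sortedPts d x).drop k) :=
    fun c hc => mem_seats.2 ⟨c, hc, rfl⟩
  have hpts : ∀ c ∈ sortedPts d x, c ∈ (pts d x : Set ℕ) := fun c hc => (Finset.mem_sort _).1 hc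
  rintro p hp q hq (hpq : p % d = q % d)
  simp only [spiralShift, Set.mem_ofPred_eq, List.mem_append, List.mem_map] at hp hq
  rcases hp with hp | ⟨a, ha, rfl⟩ <;> rcases hq with hq | ⟨b, hb, rfl⟩
  · exact pts_injOn_mod x (hpts _ (List.mem_of_mem_take hp)) (hpts _ (List.mem_of_mem_take hq))
      hpq
  · exact absurd (hpq ▸ nextPt_mod_mem hS b) (mod_notMem_seats_drop_sortedPts x hp)
  · exact absurd (hpq.symm ▸ nextPt_mod_mem hS a) (mod_notMem_seats_drop_sortedPts x hq)
  · rw [pts_injOn_mod x (hpts _ (List.mem_of_mem_drop ha)) (hpts _ (List.mem_of_mem_drop hb))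
      (mod_eq_of_nextPt_mod_eq hS (hmemS a ha) (hmemS b hb) hpq)]

lemma sortedPts_gOp {j : ℕ} (hj : j - 1 < d) :
    sortedPts d (gOp d j x) = spiralShift d (j - 1) (sortedPts d x) := by
  have hS := exists_seat_drop_sortedPts x hj
  have hR : (spiralShift d (j - 1) (sortedPts d x)).Pairwise (· < ·) :=
    pairwise_take_append_map_drop (sortedPts_pairwise x) _
      ((nextPt_strictMonoOn hS).mono fun c hc => mem_seats.2 ⟨c, hc, rfl⟩) (lt_nextPt hS)
  have hgOp : gOp d j x = fun i : Fin d =>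
      ∑ q ∈ (spiralShift d (j - 1) (sortedPts d x)).toFinset.filter (fun q => q % d = i), q / d := by
    funext i
    simp only [gOp, spiralShift, List.toFinset_append]
    rfl
  rw [hgOp, sortedPts, pts_eq_of_injOn_mod (by simpa using injOn_mod_spiralShift_sortedPts x hj)
    (by rw [List.toFinset_card_of_nodup hR.nodup, length_spiralShift, length_sortedPts])]
  exact (List.toFinset_sort _ hR.nodup).2 (hR.imp le_of_lt)

end sortedPts

section getD

variable {L : List ℕ} {k m : ℕ}

lemma getD_mem_drop (hkm : k ≤ m) (hm : m < L.length) : L.getD m 0 ∈ L.drop k :=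
  List.mem_drop_iff_getElem.2 ⟨m - k, by omega, by rw [List.getD_eq_getElem _ _ hm]; simp [hkm]⟩

lemma getD_spiralShift (hkm : k ≤ m) (hm : m < L.length) :
    (spiralShift d k L).getD m 0 = nextPt d (seats d (L.drop k)) (L.getD m 0) := by
  simp [spiralShift, List.getD_eq_getElem?_getD, List.getElem?_append_right, hkm, hm,
    Nat.min_eq_left (hkm.trans hm.le)]

lemma drop_spiralShift (hkm : k ≤ m) (hm : m ≤ L.length) :
    (spiralShift d k L).drop m = (L.drop m).map (nextPt d (seats d (L.drop k))) := by
  simp [spiralShift, List.drop_append, hkm, Nat.min_eq_left (hkm.trans hm), ← List.map_drop]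

end getD

lemma rTight_iff {r : ℕ} {x : Fin d → ℕ} : rTight d r x ↔ (sortedPts d x).getD (r - 1) 0 =
    nextPt d (seats d ((sortedPts d x).drop (r - 1))) ((sortedPts d x).getD (r - 2) 0) :=
  Iff.rfl

end Spiral

open Spiral in
theorem statement9_general (d r j : ℕ) (hr2 : 2 ≤ r) (hrd : r ≤ d) (hjr : j ≤ r - 1)
    (x : Fin d → ℕ) (hx : rTight d r x) : rTight d r (gOp d j x) := by
  have hL : (sortedPts d x).length = d := length_sortedPts x
  have hseat : ∀ m, j - 1 ≤ m → m < d →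
      (sortedPts d x).getD m 0 % d ∈ seats d ((sortedPts d x).drop (j - 1)) :=
    fun m hjm hmd => mem_seats.2 ⟨_, getD_mem_drop hjm (by omega), rfl⟩
  have hsub : ∀ c ∈ (sortedPts d x).drop (r - 1),
      c % d ∈ seats d ((sortedPts d x).drop (j - 1)) := fun c hc =>
    mem_seats.2 ⟨c, List.drop_subset_drop_left _ (by omega) hc, rfl⟩
  rw [rTight_iff] at hx ⊢
  rw [sortedPts_gOp x (by omega), getD_spiralShift (by omega) (by omega),
    getD_spiralShift (by omega) (by omega), drop_spiralShift (by omega) (by omega), hx,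
    nextPt_seats_map_nextPt (exists_seat_drop_sortedPts x (by omega)) (by simp [hL]; omega) hsub
      (hseat (r - 2) (by omega) (by omega))]

open Spiral in
/-- Let `2 ≤ r ≤ d` and `1 ≤ j ≤ r − 1`. If `x ∈ ℕ^d` is `r`-tight, then
`g_j(x)` is `r`-tight. -/
theorem statement9 (d r j : ℕ) (hr2 : 2 ≤ r) (hrd : r ≤ d) (hj1 : 1 ≤ j) (hjr : j ≤ r - 1)
    (x : Fin d → ℕ) (hx : rTight d r x) : rTight d r (gOp d j x) :=
  statement9_general d r j hr2 hrd hjr x hx
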